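/- Under the hypotheses of the optimality theorem, if the single-letter distortion depends on the source only through its present symbol, i.e., ρ(T^i x^n, T^i y^n) = ρ(x_i, T^i y^n) for each i, then the optimal causal reconstruction kernel is Markov with respect to the source: q_i*(dy_i; y^{i−1}, x^i) = q_i*(dy_i; y^{i−1}, x_i) a.s. for every i = 0, 1, …, n, i.e., each factor of the optimal kernel depends on x^i = (x_0,…,x_i) only through x_i. -/

import Mathlib

open MeasureTheory ProbabilityTheory BoundedContinuousFunction
open scoped ENNReal

noncomputable section

/-- Iterated convolution (composition) of a sequence of transition measures
`q i : (y^{i-1}, a) ↦ Measure (Y i)`, producing a measure on the product `∀ j : Fin (k+1), Y j`. -/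
noncomputable def comp {Y : ℕ → Type*} [∀ i, MeasurableSpace (Y i)] {α : Type*} :
    (k : ℕ) → (∀ i : Fin (k + 1), ((∀ j : Fin (i : ℕ), Y j) × α) → Measure (Y (i : ℕ))) →
      α → Measure (∀ j : Fin (k + 1), Y (j : ℕ))
  | 0, q, a => (q 0 (finZeroElim, a)).map (fun y => Fin.cons y finZeroElim)
  | (k + 1), q, a =>
      (comp k (fun i => q i.castSucc) a).bind
        (fun yk => (q (Fin.last (k + 1)) (yk, a)).map (Fin.snoc yk))

/-- The shift operator `T^i` acting on finite records `x^n` (cyclically, via the additive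
structure of `Fin (n+1)`): `(T^i x)_j = x_{j+i}`. -/
def shiftT {α : Type*} {n : ℕ} (i : Fin (n + 1)) (x : Fin (n + 1) → α) : Fin (n + 1) → α :=
  fun j => x (j + i)

/-- The prefix `x^i = (x_0, …, x_i)` of a record `x^n`. -/
def xpre {𝒳 : Type*} {n : ℕ} (i : Fin (n + 1)) (x : Fin (n + 1) → 𝒳) : Fin ((i : ℕ) + 1) → 𝒳 :=
  fun j => x (Fin.castLE i.isLt j)

/-- The strict prefix `y^{i-1} = (y_0, …, y_{i-1})` of a record `y^n`. -/
def ypre {𝒴 : Type*} {n : ℕ} (i : Fin (n + 1)) (y : Fin (n + 1) → 𝒴) : Fin (i : ℕ) → 𝒴 :=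
  fun j => y (Fin.castLE i.isLt.le j)

variable {n : ℕ} {𝒳 𝒴 : Type}
  [MeasurableSpace 𝒳] [TopologicalSpace 𝒳] [PolishSpace 𝒳] [BorelSpace 𝒳]
  [MeasurableSpace 𝒴] [TopologicalSpace 𝒴] [PolishSpace 𝒴] [BorelSpace 𝒴]

/-- The Banach space `L_1(μ, BC(Y_{0,n}))` of `μ`-integrable functions with values in the
Banach space `BC(Y_{0,n})` of bounded continuous real-valued functions on `Y_{0,n}`. -/
abbrev L1BC (𝒳 𝒴 : Type) (n : ℕ) [MeasurableSpace 𝒳] [TopologicalSpace 𝒴]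
    (μ : Measure (Fin (n + 1) → 𝒳)) :=
  Lp (E := (Fin (n + 1) → 𝒴) →ᵇ ℝ) 1 μ

/-- `L^w_∞(μ, M_rba(Y_{0,n}))`: the topological dual of `L_1(μ, BC(Y_{0,n}))`, equipped with
the weak* topology. -/
abbrev Lwinf (𝒳 𝒴 : Type) (n : ℕ) [MeasurableSpace 𝒳] [TopologicalSpace 𝒴]
    (μ : Measure (Fin (n + 1) → 𝒳)) :=
  WeakDual ℝ (L1BC 𝒳 𝒴 n μ)

variable (μ : Measure (Fin (n + 1) → 𝒳)) [IsProbabilityMeasure μ]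

/-- `Q_ad = L^w_∞(μ, Π_rba(Y_{0,n}))`: the elements of the dual corresponding to families of
regular bounded finitely additive *probability* measures on `Y_{0,n}`. -/
def Qad : Set (Lwinf 𝒳 𝒴 n μ) :=
  {Q | (∀ φ : L1BC 𝒳 𝒴 n μ, (∀ᵐ x ∂μ, ∀ y, 0 ≤ φ x y) → 0 ≤ Q φ) ∧
       (∀ (φ : L1BC 𝒳 𝒴 n μ) (g : (Fin (n + 1) → 𝒳) → ℝ),
         (∀ᵐ x ∂μ, φ x = BoundedContinuousFunction.const (Fin (n + 1) → 𝒴) (g x)) →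
           Q φ = ∫ x, g x ∂μ)}

/-- `Q ∈ L^w_∞(μ, M_rba(Y_{0,n}))` is represented by the family of measures `K x`:
`Q(φ) = ∫ ( ∫ φ(x, y) K(dy; x) ) μ(dx)` for all `φ ∈ L_1(μ, BC(Y_{0,n}))`. -/
def Represents (Q : Lwinf 𝒳 𝒴 n μ) (K : (Fin (n + 1) → 𝒳) → Measure (Fin (n + 1) → 𝒴)) :
    Prop :=
  ∀ φ : L1BC 𝒳 𝒴 n μ, Q φ = ∫ x, ∫ y, φ x y ∂(K x) ∂μ

/-- The causal convolution `⊗_{i=0}^n q_i(dy_i; y^{i-1}, x^i)` of a family of causal factors,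
as a family of measures on `Y_{0,n}` parametrized by `x^n`. -/
noncomputable def causalComp
    (qi : ∀ i : Fin (n + 1), Kernel ((Fin (i : ℕ) → 𝒴) × (Fin ((i : ℕ) + 1) → 𝒳)) 𝒴)
    (x : Fin (n + 1) → 𝒳) : Measure (Fin (n + 1) → 𝒴) :=
  comp (Y := fun _ => 𝒴) (α := Fin (n + 1) → 𝒳) n
    (fun i p => qi i (p.1, fun j => p.2 (Fin.castLE i.isLt j))) x

/-- A family of causal factors is a convolution of *stationary* conditional distributions:
each factor is the time-shift of the previous one. -/
def Stationary
    (qi : ∀ i : Fin (n + 1), Kernel ((Fin (i : ℕ) → 𝒴) × (Fin ((i : ℕ) + 1) → 𝒳)) 𝒴) :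
    Prop :=
  ∀ (i : Fin (n + 1)) (h : (i : ℕ) + 1 < n + 1) (y : Fin ((i : ℕ) + 1) → 𝒴)
    (x : Fin ((i : ℕ) + 2) → 𝒳),
      qi ⟨(i : ℕ) + 1, h⟩ (y, x) = qi i (fun j => y j.succ, fun j => x j.succ)

/-- The realizability constraint set `Q⃗_ad` (under the stationarity Assumption): elements of
`Q_ad` represented by a causal convolution of stationary conditional distributions. -/
def vQadStat : Set (Lwinf 𝒳 𝒴 n μ) :=
  {Q | Q ∈ Qad μ ∧
    ∃ qi : ∀ i : Fin (n + 1), Kernel ((Fin (i : ℕ) → 𝒴) × (Fin ((i : ℕ) + 1) → 𝒳)) 𝒴,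
      (∀ i, IsMarkovKernel (qi i)) ∧ Stationary qi ∧ Represents μ Q (causalComp qi)}

/-- The mutual information `𝕀(μ, q) = D(μ ⊗ q ‖ μ × ν_q)` of a source `μ` and a reconstruction
kernel `q`, where `ν_q` is the `Y`-marginal of `μ ⊗ q`. -/
noncomputable def mutualInfoKer (q : Kernel (Fin (n + 1) → 𝒳) (Fin (n + 1) → 𝒴))
    [IsMarkovKernel q] : ℝ :=
  ∫ p, Real.log (((μ ⊗ₘ q).rnDeriv (μ.prod ((μ ⊗ₘ q).map Prod.snd))) p).toReal ∂(μ ⊗ₘ q)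

open Classical in
/-- The mutual information functional `Q ↦ 𝕀(μ, Q)` on `L^w_∞(μ, M_rba(Y_{0,n}))`: if `Q` is
represented by a stochastic kernel `q`, it is `𝕀(μ, q)` (and junk value `0` otherwise). -/
noncomputable def MI (Q : Lwinf 𝒳 𝒴 n μ) : ℝ :=
  if h : ∃ q : Kernel (Fin (n + 1) → 𝒳) (Fin (n + 1) → 𝒴),
      IsMarkovKernel q ∧ Represents μ Q (fun x => q x) then
    haveI := h.choose_spec.1
    mutualInfoKer μ h.choose
  else 0

/-- The exponential-family ("tilted") measure
`e^{s ρ(T^i x, T^i y)} ν_i(dy_i; y^{i-1}) / ∫ e^{s ρ(T^i x, T^i y)} ν_i(dy_i; y^{i-1})`,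
where the reconstruction symbol `y_i` is the free variable. -/
noncomputable def tilted (s : ℝ) (ρ : (Fin (n + 1) → 𝒳) → (Fin (n + 1) → 𝒴) → ℝ)
    (νi : ∀ i : Fin (n + 1), Kernel (Fin (i : ℕ) → 𝒴) 𝒴)
    (i : Fin (n + 1)) (x : Fin (n + 1) → 𝒳) (y : Fin (n + 1) → 𝒴) : Measure 𝒴 :=
  (∫⁻ yi, ENNReal.ofReal
      (Real.exp (s * ρ (shiftT i x) (shiftT i (Function.update y i yi))))
      ∂(νi i (ypre i y)))⁻¹ •
    ((νi i (ypre i y)).withDensity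
      (fun yi => ENNReal.ofReal
        (Real.exp (s * ρ (shiftT i x) (shiftT i (Function.update y i yi))))))

/-! The optimal factor `q_i*` is, by its exponential form, determined by `ν_i*` and the map
`y ↦ ρ(T^i x, T^i y)`. If the distortion sees the source only through `x_i`, that map, hence
`q_i*`, is the same for all records agreeing at time `i`; any prefix `(y^{i-1}, x^i)` is the
prefix of some full record, so this is a statement about every argument of `q_i*`. -/

theorem xpre_surjective {𝒳 : Type*} [Nonempty 𝒳] {n : ℕ} (i : Fin (n + 1)) :
    Function.Surjective (xpre (𝒳 := 𝒳) i) :=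
  (Fin.castLE_injective i.isLt).surjective_comp_right

theorem ypre_surjective {𝒴 : Type*} [Nonempty 𝒴] {n : ℕ} (i : Fin (n + 1)) :
    Function.Surjective (ypre (𝒴 := 𝒴) i) :=
  (Fin.castLE_injective i.isLt.le).surjective_comp_right

theorem tilted_congr_source {α β : Type} [MeasurableSpace β] {m : ℕ} {s : ℝ}
    {ρ : (Fin (m + 1) → α) → (Fin (m + 1) → β) → ℝ}
    {νi : ∀ i : Fin (m + 1), Kernel (Fin (i : ℕ) → β) β} {i : Fin (m + 1)}
    {x x' : Fin (m + 1) → α}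
    (hρ : ∀ y, ρ (shiftT i x) (shiftT i y) = ρ (shiftT i x') (shiftT i y))
    (y : Fin (m + 1) → β) :
    tilted s ρ νi i x y = tilted s ρ νi i x' y := by
  simp only [tilted, hρ]

theorem causal_RDF_optimal_kernel_markov_general
    (ρ : (Fin (n + 1) → 𝒳) → (Fin (n + 1) → 𝒴) → ℝ)
    (hρ_single : ∀ (i : Fin (n + 1)) (x x' : Fin (n + 1) → 𝒳) (y : Fin (n + 1) → 𝒴),
      x i = x' i → ρ (shiftT i x) (shiftT i y) = ρ (shiftT i x') (shiftT i y))
    (s : ℝ)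
    (νi : ∀ i : Fin (n + 1), Kernel (Fin (i : ℕ) → 𝒴) 𝒴)
    (qi : ∀ i : Fin (n + 1), Kernel ((Fin (i : ℕ) → 𝒴) × (Fin ((i : ℕ) + 1) → 𝒳)) 𝒴)
    (hform : ∀ (i : Fin (n + 1)) (x : Fin (n + 1) → 𝒳) (y : Fin (n + 1) → 𝒴),
      qi i (ypre i y, xpre i x) = tilted s ρ νi i x y) :
    ∀ (i : Fin (n + 1)) (yp : Fin (i : ℕ) → 𝒴) (xp xp' : Fin ((i : ℕ) + 1) → 𝒳),
      xp (Fin.last (i : ℕ)) = xp' (Fin.last (i : ℕ)) →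
        qi i (yp, xp) = qi i (yp, xp') := by
  intro i yp xp xp' hlast
  cases isEmpty_or_nonempty 𝒴
  · exact Subsingleton.elim _ _
  have : Nonempty 𝒳 := ⟨xp 0⟩
  obtain ⟨y, rfl⟩ := ypre_surjective i yp
  obtain ⟨x, rfl⟩ := xpre_surjective i xp
  obtain ⟨x', rfl⟩ := xpre_surjective i xp'
  rw [hform, hform]
  exact tilted_congr_source (fun y => hρ_single i x x' y hlast) y

/-- Under the hypotheses of the optimality theorem, if the single-letter
distortion depends on the source only through its present symbol, i.e.
`ρ(T^i x^n, T^i y^n) = ρ(x_i, T^i y^n)`, then the optimal causal reconstruction kernel is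
Markov with respect to the source: each factor `q_i*(dy_i; y^{i-1}, x^i)` depends on
`x^i = (x_0, …, x_i)` only through the present symbol `x_i`. -/
theorem causal_RDF_optimal_kernel_markov
    (hclosed : IsClosed (vQadStat μ : Set (Lwinf 𝒳 𝒴 n μ)))
    (ρ : (Fin (n + 1) → 𝒳) → (Fin (n + 1) → 𝒴) → ℝ)
    (hρ_meas : Measurable (Function.uncurry ρ))
    (hρ_nonneg : ∀ x y, 0 ≤ ρ x y)
    (hρ_causal : ∀ (i : Fin (n + 1)) (x x' : Fin (n + 1) → 𝒳) (y y' : Fin (n + 1) → 𝒴),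
      (∀ j, j ≤ i → x j = x' j) → (∀ j, j ≤ i → y j = y' j) →
        ρ (shiftT i x) (shiftT i y) = ρ (shiftT i x') (shiftT i y'))
    (hρ_single : ∀ (i : Fin (n + 1)) (x x' : Fin (n + 1) → 𝒳) (y : Fin (n + 1) → 𝒴),
      x i = x' i → ρ (shiftT i x) (shiftT i y) = ρ (shiftT i x') (shiftT i y))
    (φ : L1BC 𝒳 𝒴 n μ)
    (hφ : ∀ᵐ x ∂μ, ∀ y, φ x y = ∑ i : Fin (n + 1), ρ (shiftT i x) (shiftT i y))
    (D : ℝ) (hD : 0 ≤ D) (s : ℝ) (hs : s ≤ 0)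
    (νi : ∀ i : Fin (n + 1), Kernel (Fin (i : ℕ) → 𝒴) 𝒴)
    (qi : ∀ i : Fin (n + 1), Kernel ((Fin (i : ℕ) → 𝒴) × (Fin ((i : ℕ) + 1) → 𝒳)) 𝒴)
    (hνi : ∀ i, IsMarkovKernel (νi i)) (hqi : ∀ i, IsMarkovKernel (qi i))
    (hstat : Stationary qi)
    (hform : ∀ (i : Fin (n + 1)) (x : Fin (n + 1) → 𝒳) (y : Fin (n + 1) → 𝒴),
      qi i (ypre i y, xpre i x) = tilted s ρ νi i x y) :
    ∀ (i : Fin (n + 1)) (yp : Fin (i : ℕ) → 𝒴) (xp xp' : Fin ((i : ℕ) + 1) → 𝒳),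
      xp (Fin.last (i : ℕ)) = xp' (Fin.last (i : ℕ)) →
        qi i (yp, xp) = qi i (yp, xp') :=
  causal_RDF_optimal_kernel_markov_general ρ hρ_single s νi qi hform
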